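/- arXiv:1012.5364 — 2 statements merged into one kernel-verified Lean document; each statement's English description precedes it below -/
import Mathlib

section
/- Let N ≥ 1 be an integer, let n > max(N−2, 0) be a real number, let R > 0, K > 0, γ > 1, M > 0. Suppose ρ, V : [0,∞) × [0,∞) → ℝ are C¹ functions such that: (i) ρ(t,r) ≥ 0 for all t, r; (ii) ρ(t,r) = 0 and V(t,r) = 0 whenever r ≥ R (compact support / non-slip boundary condition); (iii) for every t ≥ 0, α(N)·∫₀^R ρ(t,s) s^{N−1} ds = M (conservation of the total mass M); (iv) for each t ≥ 0 the map r ↦ ρ(t,r)^{γ−1} is differentiable on (0,R), and for all t ≥ 0 and 0 < r < R the radial momentum equation with attractive force holds: ∂ₜV(t,r) + V(t,r)·∂ᵣV(t,r) + (Kγ/(γ−1))·∂ᵣ(ρ(t,r)^{γ−1}) = −α(N)·r^{1−N}·∫₀^r ρ(t,s) s^{N−1} ds; (v) the initial velocity satisfies H₀ := ∫₀^R r^n V(0,r) dr > √(2 R^{2n−N+4} M / (n(n+1)(n−N+2))). Then no such global-in-time solution exists, i.e., these hypotheses lead to a contradiction (the solution must blow up before a finite time T). -/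
/-!
The weighted radial momentum `H(t) = ∫₀^R rⁿ V(t,r) dr` satisfies the Riccati inequality
`H' ≥ c H² − b`. Multiplying the momentum equation by `rⁿ` and integrating moves the
`r`-derivative of the energy density `V²/2 + Kγ/(γ−1) ρ^{γ−1}` onto the weight without boundary
terms (`n > 0`, and the solution vanishes at `r = R`). What remains is
`n ∫ r^{n−1} (V²/2 + …) ≥ (n/2) ∫ r^{n−1} V²` minus the gravity term, and since the enclosed
mass is at most `M`, gravity costs at most `b = M R^{n−N+2}/(n−N+2)`. Cauchy–Schwarz gives
`H² ≤ (∫₀^R r^{n+1}) ∫₀^R r^{n−1} V²`, hence `c = n(n+2)/(2R^{n+2})`. The initial condition is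
exactly `c H(0)² > b`; `H` then never falls back to the level where `c H² = b`, so `H' ≥ κ H²`
with `κ > 0`, and `1/H` would reach zero in finite time.
-/

/-- The constant `α(N)`: `α(1) = 1`, `α(2) = 2π`, and
`α(N) = N(N−2)·π^{N/2}/Γ(N/2+1)` for `N ≥ 3`. -/
noncomputable def alphaConst (N : ℕ) : ℝ :=
  if N = 1 then 1
  else if N = 2 then 2 * Real.pi
  else (N : ℝ) * ((N : ℝ) - 2) * Real.pi ^ ((N : ℝ) / 2) / Real.Gamma ((N : ℝ) / 2 + 1)

open Set Filter Topology MeasureTheory Metric Function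

theorem le_of_forall_hasDerivAt_of_eq_imp_pos {H D : ℝ → ℝ} {t₀ : ℝ}
    (hderiv : ∀ t ≥ t₀, HasDerivAt H (D t) t) (hpos : ∀ t ≥ t₀, H t = H t₀ → 0 < D t)
    {t : ℝ} (ht : t₀ ≤ t) : H t₀ ≤ H t :=
  image_le_of_deriv_right_lt_deriv_boundary' (f := fun _ => H t₀) (f' := 0) (B := H) (B' := D)
    continuousOn_const (fun _ _ => hasDerivWithinAt_const _ _ _) le_rfl
    (fun x hx => (hderiv x hx.1).continuousAt.continuousWithinAt)
    (fun x hx => (hderiv x hx.1).hasDerivWithinAt)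
    (fun x hx hx' => hpos x hx.1 hx'.symm) ⟨ht, le_rfl⟩

theorem false_of_forall_hasDerivAt_of_mul_sq_le {H D : ℝ → ℝ} {t₀ κ : ℝ} (hκ : 0 < κ)
    (hderiv : ∀ t ≥ t₀, HasDerivAt H (D t) t) (hpos : ∀ t ≥ t₀, 0 < H t)
    (hD : ∀ t ≥ t₀, κ * H t ^ 2 ≤ D t) : False := by
  set T := t₀ + (H t₀)⁻¹ / κ
  have hT : t₀ < T := lt_add_of_pos_right _ (by have := hpos t₀ le_rfl; positivity)
  have hinv : ∀ t ≥ t₀, HasDerivAt (fun s => (H s)⁻¹) (-D t / H t ^ 2) t :=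
    fun t ht => (hderiv t ht).inv (hpos t ht).ne'
  -- `1 / H` decreases at rate at least `κ`, so it cannot stay positive up to time `T`.
  obtain ⟨ξ, hξ, hslope⟩ := exists_hasDerivAt_eq_slope (fun s => (H s)⁻¹) _ hT
    (fun t ht => (hinv t ht.1).continuousAt.continuousWithinAt) (fun t ht => hinv t ht.1.le)
  have hξκ : -D ξ / H ξ ^ 2 ≤ -κ := by
    have := hpos ξ hξ.1.le
    rw [div_le_iff₀ (by positivity)]
    linarith [hD ξ hξ.1.le]
  rw [hslope, div_le_iff₀ (sub_pos.mpr hT)] at hξκ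
  have : 0 < (H T)⁻¹ := inv_pos.mpr (hpos T hT.le)
  have hκT : κ * (T - t₀) = (H t₀)⁻¹ := by simp only [T]; field_simp; ring
  linarith

theorem false_of_riccati {H D : ℝ → ℝ} {t₀ c b : ℝ} (hb : 0 ≤ b)
    (hcont : ContinuousWithinAt H (Ioi t₀) t₀) (hderiv : ∀ t > t₀, HasDerivAt H (D t) t)
    (hD : ∀ t > t₀, c * H t ^ 2 - b ≤ D t) (hpos : 0 < H t₀) (hinit : b < c * H t₀ ^ 2) :
    False := by
  have hopen : IsOpen {h : ℝ | 0 < h ∧ b < c * h ^ 2} :=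
    isOpen_Ioi.inter (isOpen_lt (g := fun h : ℝ => c * h ^ 2) continuous_const (by fun_prop))
  obtain ⟨t₁, ⟨hH₁, hinit₁⟩, ht₁⟩ :=
    ((hcont.eventually (hopen.mem_nhds ⟨hpos, hinit⟩)).and self_mem_nhdsWithin).exists
  have hmono : ∀ t ≥ t₁, H t₁ ≤ H t := fun t =>
    le_of_forall_hasDerivAt_of_eq_imp_pos (fun s hs => hderiv s (lt_of_lt_of_le ht₁ hs))
      (fun s hs hs' => by linarith [hD s (lt_of_lt_of_le ht₁ hs), hs' ▸ hinit₁])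
  -- Above the level `H t₁`, the constant `b` costs at most the fraction `b / (H t₁)²` of `H²`.
  refine false_of_forall_hasDerivAt_of_mul_sq_le (κ := c - b / H t₁ ^ 2) (t₀ := t₁) ?_
    (fun s hs => hderiv s (lt_of_lt_of_le ht₁ hs))
    (fun s hs => hH₁.trans_le (hmono s hs)) (fun s hs => ?_)
  · rw [sub_pos, div_lt_iff₀ (by positivity)]; exact hinit₁
  · have hsq : H t₁ ^ 2 ≤ H s ^ 2 := pow_le_pow_left₀ hH₁.le (hmono s hs) 2
    have : b ≤ b / H t₁ ^ 2 * H s ^ 2 := by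
      rw [div_mul_eq_mul_div, le_div_iff₀ (by positivity)]
      exact mul_le_mul_of_nonneg_left hsq hb
    linarith [hD s (lt_of_lt_of_le ht₁ hs)]

theorem sq_intervalIntegral_mul_le {w u v : ℝ → ℝ} {a b : ℝ} (hab : a ≤ b)
    (hw : IntervalIntegrable w volume a b) (hw0 : ∀ x ∈ Icc a b, 0 ≤ w x)
    (hu : ContinuousOn u (Icc a b)) (hv : ContinuousOn v (Icc a b)) :
    (∫ x in a..b, w x * (u x * v x)) ^ 2
      ≤ (∫ x in a..b, w x * u x ^ 2) * ∫ x in a..b, w x * v x ^ 2 := by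
  rw [← uIcc_of_le hab] at hu hv
  have hquad : ∀ s : ℝ, 0 ≤ (∫ x in a..b, w x * u x ^ 2) * (s * s)
      + 2 * (∫ x in a..b, w x * (u x * v x)) * s + ∫ x in a..b, w x * v x ^ 2 := by
    intro s
    have hexpand : ∫ x in a..b, w x * (s * u x + v x) ^ 2
        = (∫ x in a..b, w x * u x ^ 2) * (s * s)
          + 2 * (∫ x in a..b, w x * (u x * v x)) * s + ∫ x in a..b, w x * v x ^ 2 := by
      have hu2 : IntervalIntegrable (fun x => w x * u x ^ 2) volume a b :=
        hw.mul_continuousOn (hu.pow 2)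
      have huv : IntervalIntegrable (fun x => w x * (u x * v x)) volume a b :=
        hw.mul_continuousOn (hu.mul hv)
      have hv2 : IntervalIntegrable (fun x => w x * v x ^ 2) volume a b :=
        hw.mul_continuousOn (hv.pow 2)
      calc ∫ x in a..b, w x * (s * u x + v x) ^ 2
          = ∫ x in a..b, (s * s * (w x * u x ^ 2) + 2 * s * (w x * (u x * v x))
              + w x * v x ^ 2) := intervalIntegral.integral_congr fun x _ => by ring
        _ = _ := by
          rw [intervalIntegral.integral_add ((hu2.const_mul _).add (huv.const_mul _)) hv2,
            intervalIntegral.integral_add (hu2.const_mul _) (huv.const_mul _),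
            intervalIntegral.integral_const_mul, intervalIntegral.integral_const_mul]
          ring
    rw [← hexpand]
    exact intervalIntegral.integral_nonneg hab fun x hx => mul_nonneg (hw0 x hx) (sq_nonneg _)
  have := discrim_le_zero hquad
  rw [discrim] at this
  linarith

theorem integral_rpow_mul_sub_le_integral {e a g φ : ℝ → ℝ} {n R : ℝ} (hn : 0 < n) (hR : 0 ≤ R)
    (he : ContinuousOn e (Icc 0 R)) (heR : e R = 0)
    (hde : ∀ r ∈ Ioo 0 R, HasDerivAt e (-(a r + g r)) r)
    (ha : ContinuousOn a (Icc 0 R)) (hφ : IntervalIntegrable φ volume 0 R)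
    (hgφ : ∀ r ∈ Ioo 0 R, r ^ n * g r ≤ φ r) :
    (∫ r in 0..R, n * r ^ (n - 1) * e r) - ∫ r in 0..R, φ r ≤ ∫ r in 0..R, r ^ n * a r := by
  have hpow : Continuous fun r : ℝ => r ^ n := Real.continuous_rpow_const hn.le
  have hint_e : IntervalIntegrable (fun r => n * r ^ (n - 1) * e r) volume 0 R := by
    refine ((intervalIntegral.intervalIntegrable_rpow' (by linarith)).const_mul n).mul_continuousOn
      ?_
    rwa [uIcc_of_le hR]
  have hint_a : IntervalIntegrable (fun r => r ^ n * a r) volume 0 R :=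
    (hpow.continuousOn.mul ha).intervalIntegrable_of_Icc hR
  -- `-(r ^ n * e r)` vanishes at both ends, and its derivative is bounded by the integrand below.
  have key := intervalIntegral.sub_le_integral_of_hasDeriv_right_of_le hR
    (g := fun r => -(r ^ n * e r))
    (φ := fun r => r ^ n * a r + φ r - n * r ^ (n - 1) * e r)
    (hpow.continuousOn.mul he).neg
    (fun r hr => (((Real.hasDerivAt_rpow_const (Or.inl hr.1.ne')).mul
      (hde r hr)).neg).hasDerivWithinAt)
    ((intervalIntegrable_iff_integrableOn_Icc_of_le hR).mp ((hint_a.add hφ).sub hint_e))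
    (fun r hr => by linarith [hgφ r hr])
  rw [intervalIntegral.integral_sub (hint_a.add hφ) hint_e,
    intervalIntegral.integral_add hint_a hφ] at key
  simp only [heR, mul_zero, neg_zero, Real.zero_rpow hn.ne', zero_mul, sub_zero] at key
  linarith

theorem mul_sq_integral_rpow_mul_le {n R : ℝ} {v : ℝ → ℝ} (hn : 0 < n) (hR : 0 < R)
    (hv : ContinuousOn v (Icc 0 R)) :
    n * (n + 2) / (2 * R ^ (n + 2)) * (∫ r in 0..R, r ^ n * v r) ^ 2
      ≤ n / 2 * ∫ r in 0..R, r ^ (n - 1) * v r ^ 2 := by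
  have hCS := sq_intervalIntegral_mul_le hR.le (w := fun r => r ^ (n - 1)) (v := id)
    (intervalIntegral.intervalIntegrable_rpow' (by linarith))
    (fun r hr => Real.rpow_nonneg hr.1 _) hv continuousOn_id
  have hH : ∫ r in 0..R, r ^ (n - 1) * (v r * id r) = ∫ r in 0..R, r ^ n * v r :=
    intervalIntegral.integral_congr fun r hr => by
      have h := Real.rpow_add_one' (uIcc_of_le hR.le ▸ hr).1 (by linarith : n - 1 + 1 ≠ 0)
      rw [sub_add_cancel] at h
      simp only [id, h]; ring
  have hA : ∫ r in 0..R, r ^ (n - 1) * id r ^ 2 = R ^ (n + 2) / (n + 2) := by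
    rw [intervalIntegral.integral_congr (g := fun r => r ^ (n + 1)) fun r hr => by
      rw [id, ← Real.rpow_two, ← Real.rpow_add' (uIcc_of_le hR.le ▸ hr).1 (by linarith),
        show n - 1 + 2 = n + 1 by ring],
      integral_rpow (Or.inl (by linarith)), Real.zero_rpow (by linarith),
      show n + 1 + 1 = n + 2 by ring, sub_zero]
  rw [hH, hA] at hCS
  have := Real.rpow_pos_of_pos hR (n + 2)
  calc n * (n + 2) / (2 * R ^ (n + 2)) * (∫ r in 0..R, r ^ n * v r) ^ 2
      ≤ n * (n + 2) / (2 * R ^ (n + 2))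
          * ((∫ r in 0..R, r ^ (n - 1) * v r ^ 2) * (R ^ (n + 2) / (n + 2))) := by gcongr
    _ = n / 2 * ∫ r in 0..R, r ^ (n - 1) * v r ^ 2 := by field_simp

theorem DifferentiableWithinAt.hasDerivAt_uncurry_left {f : ℝ → ℝ → ℝ} {s u : Set ℝ}
    {t r : ℝ} (hf : DifferentiableWithinAt ℝ (uncurry f) (s ×ˢ u) (t, r)) (hs : s ∈ 𝓝 t)
    (hr : r ∈ u) :
    HasDerivAt (fun τ => f τ r) (fderivWithin ℝ (uncurry f) (s ×ˢ u) (t, r) (1, 0)) t := by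
  have h := hf.hasFDerivWithinAt.comp_hasDerivWithinAt (s := s) t
    ((hasDerivAt_id' t).prodMk (hasDerivAt_const t r)).hasDerivWithinAt
    fun _ hτ => mk_mem_prod hτ hr
  exact h.hasDerivAt hs

theorem DifferentiableWithinAt.differentiableAt_uncurry_right {f : ℝ → ℝ → ℝ} {s u : Set ℝ}
    {t r : ℝ} (hf : DifferentiableWithinAt ℝ (uncurry f) (s ×ˢ u) (t, r)) (ht : t ∈ s)
    (hu : u ∈ 𝓝 r) : DifferentiableAt ℝ (f t) r := by
  have h := hf.hasFDerivWithinAt.comp_hasDerivWithinAt (s := u) r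
    ((hasDerivAt_const r t).prodMk (hasDerivAt_id' r)).hasDerivWithinAt
    fun _ hx => mk_mem_prod ht hx
  exact (h.hasDerivAt hu).differentiableAt

theorem ContDiffOn.continuousOn_uncurry_deriv_left {f : ℝ → ℝ → ℝ} {s u : Set ℝ}
    (hf : ContDiffOn ℝ 1 (uncurry f) (s ×ˢ u)) (hs : IsOpen s) (hu : UniqueDiffOn ℝ u) :
    ContinuousOn (uncurry fun t r => deriv (fun τ => f τ r) t) (s ×ˢ u) :=
  ((hf.continuousOn_fderivWithin (hs.uniqueDiffOn.prod hu) le_rfl).clm_apply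
    continuousOn_const).congr fun p hp =>
      ((hf.differentiableOn one_ne_zero p hp).hasDerivAt_uncurry_left
        (hs.mem_nhds hp.1) hp.2).deriv

theorem continuousOn_intervalIntegral_of_continuousOn_Ici_prod {F : ℝ → ℝ → ℝ} {a b : ℝ}
    (ha : 0 ≤ a) (hb : 0 ≤ b) (hF : ContinuousOn (uncurry F) (Ici 0 ×ˢ Ici 0)) :
    ContinuousOn (fun x => ∫ r in a..b, F x r) (Ici 0) := by
  -- Precompose with the retraction of the plane onto the closed quadrant.
  have hG : Continuous (uncurry fun x r => F (max x 0) (max r 0)) :=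
    hF.comp_continuous (f := fun p : ℝ × ℝ => (max p.1 0, max p.2 0)) (by fun_prop)
      fun p => mk_mem_prod (le_max_right p.1 0) (le_max_right p.2 0)
  refine (intervalIntegral.continuous_parametric_intervalIntegral_of_continuous' hG a b
    |>.continuousOn).congr fun x (hx : 0 ≤ x) => intervalIntegral.integral_congr fun r hr => ?_
  have hr : 0 ≤ r := le_trans (le_min ha hb) hr.1
  simp [max_eq_left hx, max_eq_left hr]

theorem hasDerivAt_intervalIntegral_of_continuousOn {F F' : ℝ → ℝ → ℝ} {a b x₀ δ : ℝ}
    (hab : a ≤ b) (hδ : 0 < δ)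
    (hF : ContinuousOn (uncurry F) (closedBall x₀ δ ×ˢ Icc a b))
    (hF' : ContinuousOn (uncurry F') (closedBall x₀ δ ×ˢ Icc a b))
    (hderiv : ∀ x ∈ ball x₀ δ, ∀ r ∈ Icc a b, HasDerivAt (fun y => F y r) (F' x r) x) :
    HasDerivAt (fun x => ∫ r in a..b, F x r) (∫ r in a..b, F' x₀ r) x₀ := by
  obtain ⟨C, hC⟩ :=
    ((isCompact_closedBall x₀ δ).prod isCompact_Icc).exists_bound_of_continuousOn hF'
  have hx₀ : x₀ ∈ closedBall x₀ δ := mem_closedBall_self hδ.le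
  have hmeas : ∀ {G : ℝ → ℝ → ℝ}, ContinuousOn (uncurry G) (closedBall x₀ δ ×ˢ Icc a b) →
      ∀ x ∈ closedBall x₀ δ, AEStronglyMeasurable (G x) (volume.restrict (uIoc a b)) :=
    fun hG x hx => ((hG.uncurry_left x hx).mono (uIoc_of_le hab ▸ Ioc_subset_Icc_self))
      |>.aestronglyMeasurable measurableSet_uIoc
  refine (intervalIntegral.hasDerivAt_integral_of_dominated_loc_of_deriv_le (bound := fun _ => C)
    (ball_mem_nhds x₀ hδ) ?_ ((hF.uncurry_left x₀ hx₀).intervalIntegrable_of_Icc hab)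
    (hmeas hF' x₀ hx₀) ?_ intervalIntegrable_const ?_).2
  · filter_upwards [ball_mem_nhds x₀ hδ] with x hx using hmeas hF x (ball_subset_closedBall hx)
  · refine .of_forall fun r hr x hx => hC (x, r) ⟨ball_subset_closedBall hx, ?_⟩
    exact Ioc_subset_Icc_self (uIoc_of_le hab ▸ hr)
  · exact .of_forall fun r hr x hx => hderiv x hx r (Ioc_subset_Icc_self (uIoc_of_le hab ▸ hr))

theorem hasDerivAt_intervalIntegral_rpow_mul {V : ℝ → ℝ → ℝ} {n R t : ℝ} (hn : 0 ≤ n)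
    (hR : 0 ≤ R) (hV : ContDiffOn ℝ 1 (uncurry V) (Ici 0 ×ˢ Ici 0)) (ht : 0 < t) :
    HasDerivAt (fun t => ∫ r in 0..R, r ^ n * V t r)
      (∫ r in 0..R, r ^ n * deriv (fun τ => V τ r) t) t := by
  have hpow : Continuous fun p : ℝ × ℝ => p.2 ^ n := continuous_snd.rpow_const fun _ => Or.inr hn
  have hsub : closedBall t (t / 2) ×ˢ Icc 0 R ⊆ Ioi 0 ×ˢ Ici 0 := fun p hp => by
    have h := hp.1
    rw [Real.closedBall_eq_Icc] at h
    exact ⟨mem_Ioi.mpr (by linarith [h.1]), hp.2.1⟩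
  have hV' : ContDiffOn ℝ 1 (uncurry V) (Ioi 0 ×ˢ Ici 0) :=
    hV.mono (prod_mono Ioi_subset_Ici_self subset_rfl)
  refine hasDerivAt_intervalIntegral_of_continuousOn hR (half_pos ht)
    (F := fun t r => r ^ n * V t r) (F' := fun t r => r ^ n * deriv (fun τ => V τ r) t)
    (hpow.continuousOn.mul (hV'.continuousOn.mono hsub))
    (hpow.continuousOn.mul ((hV'.continuousOn_uncurry_deriv_left isOpen_Ioi
      (uniqueDiffOn_Ici 0)).mono hsub)) fun x hx r hr => ?_
  have hx : 0 < x := mem_Ioi.mp (hsub (mk_mem_prod (ball_subset_closedBall hx) hr)).1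
  exact (((hV.differentiableOn one_ne_zero (x, r) ⟨hx.le, hr.1⟩).hasDerivAt_uncurry_left
    (Ici_mem_nhds hx) hr.1).differentiableAt.hasDerivAt).const_mul _

theorem alphaConst_nonneg (N : ℕ) : 0 ≤ alphaConst N := by
  unfold alphaConst
  split_ifs with h1 h2
  · exact zero_le_one
  · positivity
  · have hN : 0 ≤ (N : ℝ) * ((N : ℝ) - 2) := by
      rcases Nat.eq_zero_or_pos N with rfl | hpos
      · simp
      · have : (2 : ℝ) ≤ N := by exact_mod_cast (by omega : 2 ≤ N)
        exact mul_nonneg (by positivity) (by linarith)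
    exact div_nonneg (mul_nonneg hN (by positivity)) (Real.Gamma_pos_of_pos (by positivity)).le

theorem rpow_mul_gravity_le {N : ℕ} {n R M r : ℝ} {ρ : ℝ → ℝ}
    (hρ0 : ∀ s ∈ Icc 0 R, 0 ≤ ρ s)
    (hρ : IntervalIntegrable (fun s => ρ s * s ^ (N - 1)) volume 0 R)
    (hmass : alphaConst N * ∫ s in 0..R, ρ s * s ^ (N - 1) = M) (hr : r ∈ Ioc 0 R) :
    r ^ n * (alphaConst N * r ^ ((1 : ℝ) - N) * ∫ s in 0..r, ρ s * s ^ (N - 1))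
      ≤ M * r ^ (n - N + 1) := by
  have henclosed : alphaConst N * ∫ s in 0..r, ρ s * s ^ (N - 1) ≤ M := by
    rw [← hmass]
    refine mul_le_mul_of_nonneg_left ?_ (alphaConst_nonneg N)
    refine intervalIntegral.integral_mono_interval le_rfl hr.1.le hr.2 ?_ hρ
    filter_upwards [ae_restrict_mem measurableSet_Ioc] with s hs
    exact mul_nonneg (hρ0 s ⟨hs.1.le, hs.2⟩) (pow_nonneg hs.1.le _)
  have hpow : r ^ n * r ^ ((1 : ℝ) - N) = r ^ (n - N + 1) := by
    rw [← Real.rpow_add hr.1]; ring_nf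
  calc r ^ n * (alphaConst N * r ^ ((1 : ℝ) - N) * ∫ s in 0..r, ρ s * s ^ (N - 1))
      = (alphaConst N * ∫ s in 0..r, ρ s * s ^ (N - 1)) * (r ^ n * r ^ ((1 : ℝ) - N)) := by ring
    _ ≤ M * r ^ (n - N + 1) := by
      rw [hpow]; exact mul_le_mul_of_nonneg_right henclosed (Real.rpow_nonneg hr.1.le _)

theorem eulerPoisson_virial_le {N : ℕ} {n R k γ M : ℝ} {ρ v a : ℝ → ℝ}
    (hn : (N : ℝ) - 2 < n) (hn0 : 0 < n) (hR : 0 ≤ R) (hk : 0 ≤ k) (hγ : 1 < γ)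
    (hρ : ContinuousOn ρ (Icc 0 R)) (hρ0 : ∀ r ∈ Icc 0 R, 0 ≤ ρ r) (hρR : ρ R = 0)
    (hv : ContinuousOn v (Icc 0 R)) (hvR : v R = 0) (ha : ContinuousOn a (Icc 0 R))
    (hmass : alphaConst N * ∫ s in 0..R, ρ s * s ^ (N - 1) = M)
    (hv' : ∀ r ∈ Ioo 0 R, DifferentiableAt ℝ v r)
    (hp' : ∀ r ∈ Ioo 0 R, DifferentiableAt ℝ (fun s => ρ s ^ (γ - 1)) r)
    (hmom : ∀ r ∈ Ioo 0 R, a r + v r * deriv v r + k * deriv (fun s => ρ s ^ (γ - 1)) r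
      = -(alphaConst N * r ^ ((1 : ℝ) - N) * ∫ s in 0..r, ρ s * s ^ (N - 1))) :
    n / 2 * (∫ r in 0..R, r ^ (n - 1) * v r ^ 2) - M * R ^ (n - N + 2) / (n - N + 2)
      ≤ ∫ r in 0..R, r ^ n * a r := by
  set e : ℝ → ℝ := fun r => v r ^ 2 / 2 + k * ρ r ^ (γ - 1)
  have hp : ContinuousOn (fun r => ρ r ^ (γ - 1)) (Icc 0 R) :=
    hρ.rpow_const fun _ _ => Or.inr (by linarith)
  have he : ContinuousOn e (Icc 0 R) := ((hv.pow 2).div_const 2).add (continuousOn_const.mul hp)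
  have heR : e R = 0 := by simp [e, hvR, hρR, Real.zero_rpow (by linarith : γ - 1 ≠ 0)]
  have hde : ∀ r ∈ Ioo 0 R, HasDerivAt e
      (-(a r + alphaConst N * r ^ ((1 : ℝ) - N) * ∫ s in 0..r, ρ s * s ^ (N - 1))) r := by
    intro r hr
    refine ((((hv' r hr).hasDerivAt.pow 2).div_const 2).add
      ((hp' r hr).hasDerivAt.const_mul k)).congr_deriv ?_
    linear_combination hmom r hr
  have hρint : IntervalIntegrable (fun s => ρ s * s ^ (N - 1)) volume 0 R :=
    (hρ.mul (continuous_pow _).continuousOn).intervalIntegrable_of_Icc hR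
  have hφ : IntervalIntegrable (fun r => M * r ^ (n - N + 1)) volume 0 R :=
    (intervalIntegral.intervalIntegrable_rpow' (by linarith)).const_mul M
  have key := integral_rpow_mul_sub_le_integral hn0 hR he heR hde ha hφ
    fun r hr => rpow_mul_gravity_le hρ0 hρint hmass ⟨hr.1, hr.2.le⟩
  have hφval : ∫ r in 0..R, M * r ^ (n - N + 1) = M * R ^ (n - N + 2) / (n - N + 2) := by
    rw [intervalIntegral.integral_const_mul, integral_rpow (Or.inl (by linarith)),
      show n - N + 1 + 1 = n - N + 2 by ring, Real.zero_rpow (by linarith)]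
    ring
  have hkinetic : n / 2 * (∫ r in 0..R, r ^ (n - 1) * v r ^ 2)
      ≤ ∫ r in 0..R, n * r ^ (n - 1) * e r := by
    have hw : IntervalIntegrable (fun r => r ^ (n - 1)) volume 0 R :=
      intervalIntegral.intervalIntegrable_rpow' (by linarith)
    rw [← uIcc_of_le hR] at hv he
    rw [← intervalIntegral.integral_const_mul]
    refine intervalIntegral.integral_mono_on hR ((hw.mul_continuousOn (hv.pow 2)).const_mul _)
      ((hw.const_mul n).mul_continuousOn he) fun r hr => ?_
    have : 0 ≤ r ^ (n - 1) * (k * ρ r ^ (γ - 1)) :=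
      mul_nonneg (Real.rpow_nonneg hr.1 _) (mul_nonneg hk (Real.rpow_nonneg (hρ0 r hr) _))
    simp only [e]
    nlinarith
  linarith

theorem eulerPoisson_mass_term_lt_of_sqrt_lt {N : ℕ} {n R M h : ℝ} (hn : 0 < n) (hnN : (N : ℝ) - 2 < n)
    (hR : 0 < R) (hM : 0 ≤ M)
    (hh : √(2 * R ^ (2 * n - N + 4) * M / (n * (n + 1) * (n - N + 2))) < h) :
    M * R ^ (n - N + 2) / (n - N + 2) < n * (n + 2) / (2 * R ^ (n + 2)) * h ^ 2 := by
  have hnN' : 0 < n - N + 2 := by linarith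
  have hsplit : R ^ (2 * n - N + 4) = R ^ (n + 2) * R ^ (n - N + 2) := by
    rw [← Real.rpow_add hR]; ring_nf
  have hRn : 0 < R ^ (n + 2) := Real.rpow_pos_of_pos hR _
  have hb : 0 ≤ M * R ^ (n - N + 2) / (n - N + 2) := by
    have := Real.rpow_pos_of_pos hR (n - N + 2); positivity
  calc M * R ^ (n - N + 2) / (n - N + 2)
      ≤ (n + 2) / (n + 1) * (M * R ^ (n - N + 2) / (n - N + 2)) :=
        le_mul_of_one_le_left hb ((one_le_div (by linarith)).mpr (by linarith))
    _ = n * (n + 2) / (2 * R ^ (n + 2))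
          * (2 * R ^ (2 * n - N + 4) * M / (n * (n + 1) * (n - N + 2))) := by
        rw [hsplit]; field_simp
    _ < n * (n + 2) / (2 * R ^ (n + 2)) * h ^ 2 :=
        mul_lt_mul_of_pos_left (Real.lt_sq_of_sqrt_lt hh) (by positivity)

theorem blowup_eulerPoisson_attractive_with_pressure_general
    (N : ℕ) (n R K γ M : ℝ)
    (hn : max ((N : ℝ) - 2) 0 < n) (hR : 0 < R) (hK : 0 < K) (hγ : 1 < γ) (hM : 0 < M)
    (ρ V : ℝ → ℝ → ℝ)
    (hρC1 : ContDiffOn ℝ 1 (Function.uncurry ρ) (Set.Ici 0 ×ˢ Set.Ici 0))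
    (hVC1 : ContDiffOn ℝ 1 (Function.uncurry V) (Set.Ici 0 ×ˢ Set.Ici 0))
    (hρnn : ∀ t r, 0 ≤ ρ t r)
    (hsupp : ∀ t r, R ≤ r → ρ t r = 0 ∧ V t r = 0)
    (hmass : ∀ t, 0 ≤ t →
      alphaConst N * (∫ s in (0:ℝ)..R, ρ t s * s ^ (N - 1)) = M)
    (hdiffp : ∀ t, 0 ≤ t → ∀ r ∈ Set.Ioo (0:ℝ) R,
      DifferentiableAt ℝ (fun s => ρ t s ^ (γ - 1)) r)
    (hmom : ∀ t, 0 ≤ t → ∀ r ∈ Set.Ioo (0:ℝ) R,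
      deriv (fun τ => V τ r) t + V t r * deriv (fun s => V t s) r
        + (K * γ / (γ - 1)) * deriv (fun s => ρ t s ^ (γ - 1)) r
      = -(alphaConst N * r ^ ((1:ℝ) - N) * ∫ s in (0:ℝ)..r, ρ t s * s ^ (N - 1)))
    (hH0 : Real.sqrt (2 * R ^ (2 * n - N + 4) * M / (n * (n + 1) * (n - N + 2)))
        < ∫ r in (0:ℝ)..R, r ^ n * V 0 r) :
    False := by
  have hn0 : 0 < n := (le_max_right _ _).trans_lt hn
  have hnN : (N : ℝ) - 2 < n := (le_max_left _ _).trans_lt hn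
  have hVt : ContinuousOn (uncurry fun t r => deriv (fun τ => V τ r) t) (Ioi 0 ×ˢ Ici 0) :=
    (hVC1.mono (prod_mono Ioi_subset_Ici_self subset_rfl)).continuousOn_uncurry_deriv_left
      isOpen_Ioi (uniqueDiffOn_Ici 0)
  refine false_of_riccati (t₀ := 0) (H := fun t => ∫ r in (0:ℝ)..R, r ^ n * V t r)
    (D := fun t => ∫ r in (0:ℝ)..R, r ^ n * deriv (fun τ => V τ r) t)
    (c := n * (n + 2) / (2 * R ^ (n + 2))) (b := M * R ^ (n - N + 2) / (n - N + 2))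
    (div_nonneg (mul_nonneg hM.le (Real.rpow_nonneg hR.le _)) (by linarith)) ?_
    (fun t ht => hasDerivAt_intervalIntegral_rpow_mul hn0.le hR.le hVC1 ht) (fun t ht => ?_)
    ((Real.sqrt_nonneg _).trans_lt hH0) (eulerPoisson_mass_term_lt_of_sqrt_lt hn0 hnN hR hM.le hH0)
  · exact (continuousOn_intervalIntegral_of_continuousOn_Ici_prod le_rfl hR.le
      (F := fun t r => r ^ n * V t r) ((continuous_snd.rpow_const fun _ => Or.inr hn0.le
        ).continuousOn.mul hVC1.continuousOn) 0 self_mem_Ici).mono Ioi_subset_Ici_self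
  have hv : ContinuousOn (V t) (Icc 0 R) :=
    (hVC1.continuousOn.uncurry_left t ht.le).mono Icc_subset_Ici_self
  have hvirial := eulerPoisson_virial_le hnN hn0 hR.le
    (div_nonneg (mul_nonneg hK.le (by linarith)) (by linarith)) hγ
    ((hρC1.continuousOn.uncurry_left t ht.le).mono Icc_subset_Ici_self) (fun r _ => hρnn t r)
    (hsupp t R le_rfl).1 hv (hsupp t R le_rfl).2
    ((hVt.uncurry_left t ht).mono Icc_subset_Ici_self) (hmass t ht.le)
    (fun r hr => (hVC1.differentiableOn one_ne_zero (t, r) ⟨ht.le, hr.1.le⟩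
      ).differentiableAt_uncurry_right ht.le (Ici_mem_nhds hr.1))
    (hdiffp t ht.le) (hmom t ht.le)
  linarith [mul_sq_integral_rpow_mul_le hn0 hR hv]

/-- Blowup for the `C¹` solutions of the `N`-dimensional Euler–Poisson equations with
attractive forces (`δ = −1`) and pressure (`K > 0`, `γ > 1`), in radial symmetry:
under the stated initial condition on `H₀ = ∫₀^R rⁿ V₀ dr`, no global-in-time solution
with compact support in `[0,R]` exists. -/
theorem blowup_eulerPoisson_attractive_with_pressure
    (N : ℕ) (hN : 1 ≤ N) (n R K γ M : ℝ)
    (hn : max ((N : ℝ) - 2) 0 < n) (hR : 0 < R) (hK : 0 < K) (hγ : 1 < γ) (hM : 0 < M)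
    (ρ V : ℝ → ℝ → ℝ)
    (hρC1 : ContDiffOn ℝ 1 (Function.uncurry ρ) (Set.Ici 0 ×ˢ Set.Ici 0))
    (hVC1 : ContDiffOn ℝ 1 (Function.uncurry V) (Set.Ici 0 ×ˢ Set.Ici 0))
    (hρnn : ∀ t r, 0 ≤ ρ t r)
    (hsupp : ∀ t r, R ≤ r → ρ t r = 0 ∧ V t r = 0)
    (hmass : ∀ t, 0 ≤ t →
      alphaConst N * (∫ s in (0:ℝ)..R, ρ t s * s ^ (N - 1)) = M)
    (hdiffp : ∀ t, 0 ≤ t → ∀ r ∈ Set.Ioo (0:ℝ) R,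
      DifferentiableAt ℝ (fun s => ρ t s ^ (γ - 1)) r)
    (hmom : ∀ t, 0 ≤ t → ∀ r ∈ Set.Ioo (0:ℝ) R,
      deriv (fun τ => V τ r) t + V t r * deriv (fun s => V t s) r
        + (K * γ / (γ - 1)) * deriv (fun s => ρ t s ^ (γ - 1)) r
      = -(alphaConst N * r ^ ((1:ℝ) - N) * ∫ s in (0:ℝ)..r, ρ t s * s ^ (N - 1)))
    (hH0 : Real.sqrt (2 * R ^ (2 * n - N + 4) * M / (n * (n + 1) * (n - N + 2)))
        < ∫ r in (0:ℝ)..R, r ^ n * V 0 r) :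
    False :=
  blowup_eulerPoisson_attractive_with_pressure_general N n R K γ M hn hR hK hγ hM ρ V hρC1 hVC1 hρnn
    hsupp hmass hdiffp hmom hH0
end

section
/- Let n > 0 be a real number, let R > 0, K > 0, γ > 1. Let H₀ > 0 and set T := 2R^{n+2}/(n(n+1)H₀). Then there exist no C¹ functions ρ, V : [0,T] × [0,∞) → ℝ such that: (i) ρ(t,r) ≥ 0 for all t, r; (ii) ρ(t,r) = 0 and V(t,r) = 0 whenever r ≥ R (compact support / non-slip boundary condition); (iii) for each t the map r ↦ ρ(t,r)^{γ−1} is differentiable on (0,R), and for all t ∈ [0,T] and 0 < r < R the radial momentum equation of the compressible Euler equations holds: ∂ₜV(t,r) + V(t,r)·∂ᵣV(t,r) + (Kγ/(γ−1))·∂ᵣ(ρ(t,r)^{γ−1}) = 0; (iv) ∫₀^R r^n V(0,r) dr = H₀. In other words, such a solution blows up on or before the finite time T = 2R^{n+2}/(n(n+1)H₀). -/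
/-!
Let `H(t) = ∫₀^R rⁿ V(t, r) dr`. The momentum equation says `∂ₜV = -∂ᵣg` with
`g = V²/2 + Kγ/(γ-1) ρ^(γ-1) ≥ V²/2`, and `g` vanishes at `r = R`; integrating by parts against
`rⁿ` gives `H' = n ∫₀^R rⁿ⁻¹ g dr ≥ (n/2) ∫₀^R rⁿ⁻¹ V² dr`. Cauchy–Schwarz for `r^((n+1)/2)` and
`r^((n-1)/2) V` bounds `H²` by `R^(n+2)/(n+2)` times the same integral, so `H' ≥ κ H²` with
`κ = n(n+2)/(2R^(n+2))`. Then `1/H + κ t` is nonincreasing while `H ≥ H₀ > 0`, which forces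
`κ T < 1/H₀`; but `κ T = (n+2)/((n+1)H₀) > 1/H₀`.
-/

open Set Filter Topology MeasureTheory Function
open scoped Interval

section ParametricIntegral

variable {E : Type*} [NormedAddCommGroup E] [NormedSpace ℝ E]

theorem continuousOn_intervalIntegral_of_continuousOn_prod {F : ℝ → ℝ → E} {K : Set ℝ}
    {a b : ℝ} (hK : IsCompact K) (hab : a ≤ b) (hF : ContinuousOn (uncurry F) (K ×ˢ Icc a b)) :
    ContinuousOn (fun t => ∫ r in a..b, F t r) K := by
  obtain ⟨M, hM⟩ := (hK.prod isCompact_Icc).exists_bound_of_continuousOn hF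
  intro t ht
  refine intervalIntegral.continuousWithinAt_of_dominated_interval (bound := fun _ => M) ?_ ?_
    intervalIntegrable_const ?_
  · filter_upwards [self_mem_nhdsWithin] with x hx
    rw [uIoc_of_le hab]
    exact ((hF.uncurry_left x hx).mono Ioc_subset_Icc_self).aestronglyMeasurable measurableSet_Ioc
  · filter_upwards [self_mem_nhdsWithin] with x hx
    refine ae_of_all _ fun r hr => hM (x, r) ⟨hx, ?_⟩
    rw [uIoc_of_le hab] at hr
    exact Ioc_subset_Icc_self hr
  · refine ae_of_all _ fun r hr => ?_
    rw [uIoc_of_le hab] at hr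
    exact hF.uncurry_right r (Ioc_subset_Icc_self hr) t ht

theorem hasDerivAt_intervalIntegral_of_continuousOn_prod {F F' : ℝ → ℝ → E} {K : Set ℝ}
    {a b t₀ : ℝ} (hK : IsCompact K) (ht₀ : K ∈ 𝓝 t₀) (hab : a ≤ b)
    (hF : ContinuousOn (uncurry F) (K ×ˢ Icc a b)) (hF' : ContinuousOn (uncurry F') (K ×ˢ Icc a b))
    (hderiv : ∀ t ∈ interior K, ∀ r ∈ Ioc a b, HasDerivAt (F · r) (F' t r) t) :
    HasDerivAt (fun t => ∫ r in a..b, F t r) (∫ r in a..b, F' t₀ r) t₀ := by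
  obtain ⟨M, hM⟩ := (hK.prod isCompact_Icc).exists_bound_of_continuousOn hF'
  have hmeas : ∀ G : ℝ → ℝ → E, ContinuousOn (uncurry G) (K ×ˢ Icc a b) → ∀ t ∈ K,
      AEStronglyMeasurable (G t) (volume.restrict (Ι a b)) := fun G hG t ht => by
    rw [uIoc_of_le hab]
    exact ((hG.uncurry_left t ht).mono Ioc_subset_Icc_self).aestronglyMeasurable measurableSet_Ioc
  refine (intervalIntegral.hasDerivAt_integral_of_dominated_loc_of_deriv_le (bound := fun _ => M)
    (interior_mem_nhds.2 ht₀) ?_ ?_ (hmeas F' hF' t₀ (mem_of_mem_nhds ht₀)) ?_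
    intervalIntegrable_const ?_).2
  · filter_upwards [ht₀] with t ht using hmeas F hF t ht
  · exact (hF.uncurry_left t₀ (mem_of_mem_nhds ht₀)).intervalIntegrable_of_Icc hab
  · refine ae_of_all _ fun r hr t ht => hM (t, r) ⟨interior_subset ht, ?_⟩
    rw [uIoc_of_le hab] at hr
    exact Ioc_subset_Icc_self hr
  · refine ae_of_all _ fun r hr t ht => hderiv t ht r ?_
    rwa [uIoc_of_le hab] at hr

end ParametricIntegral

theorem ContDiffOn.exists_continuousOn_hasDerivAt_fst {f : ℝ → ℝ → ℝ} {s : Set (ℝ × ℝ)}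
    (hf : ContDiffOn ℝ 1 (uncurry f) s) (hs : UniqueDiffOn ℝ s) :
    ∃ f' : ℝ → ℝ → ℝ, ContinuousOn (uncurry f') s ∧
      ∀ t r, s ∈ 𝓝 (t, r) → HasDerivAt (f · r) (f' t r) t := by
  refine ⟨fun t r => fderivWithin ℝ (uncurry f) s (t, r) (1, 0),
    (hf.continuousOn_fderivWithin hs le_rfl).clm_apply continuousOn_const, fun t r hts => ?_⟩
  have hderiv := ((hf.differentiableOn one_ne_zero).differentiableAt hts).hasFDerivAt
  rw [← fderivWithin_of_mem_nhds hts] at hderiv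
  exact hderiv.comp_hasDerivAt t ((hasDerivAt_id t).prodMk (hasDerivAt_const t r))

theorem ContinuousOn.rpow_snd_mul {f : ℝ → ℝ → ℝ} {u : Set (ℝ × ℝ)} {n : ℝ} (hn : 0 ≤ n)
    (hf : ContinuousOn (uncurry f) u) : ContinuousOn (uncurry fun t r => r ^ n * f t r) u :=
  ((Real.continuous_rpow_const hn).comp_continuousOn continuousOn_snd).mul hf

theorem intervalIntegrable_rpow_mul {s a b : ℝ} {f : ℝ → ℝ} (hs : -1 < s)
    (hf : ContinuousOn f [[a, b]]) : IntervalIntegrable (fun r => r ^ s * f r) volume a b :=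
  (intervalIntegral.intervalIntegrable_rpow' hs).mul_continuousOn hf

theorem sq_intervalIntegral_mul_le_s3 {f g : ℝ → ℝ} {a b : ℝ} (hab : a ≤ b)
    (hf : IntervalIntegrable (fun x => f x ^ 2) volume a b)
    (hg : IntervalIntegrable (fun x => g x ^ 2) volume a b)
    (hfg : IntervalIntegrable (fun x => f x * g x) volume a b) :
    (∫ x in a..b, f x * g x) ^ 2 ≤ (∫ x in a..b, f x ^ 2) * ∫ x in a..b, g x ^ 2 := by
  have hquad : ∀ s : ℝ, 0 ≤ (∫ x in a..b, f x ^ 2) * (s * s)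
      + (-2 * ∫ x in a..b, f x * g x) * s + ∫ x in a..b, g x ^ 2 := fun s => by
    have hexp : (fun x => (s * f x - g x) ^ 2)
        = fun x => s * s * f x ^ 2 + -2 * s * (f x * g x) + g x ^ 2 := by
      funext x; ring
    have hnonneg : 0 ≤ ∫ x in a..b, (s * f x - g x) ^ 2 :=
      intervalIntegral.integral_nonneg hab fun x _ => sq_nonneg _
    rw [hexp, intervalIntegral.integral_add ((hf.const_mul _).add (hfg.const_mul _)) hg,
      intervalIntegral.integral_add (hf.const_mul _) (hfg.const_mul _),
      intervalIntegral.integral_const_mul, intervalIntegral.integral_const_mul] at hnonneg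
    linarith
  have := discrim_le_zero hquad
  rw [discrim] at this
  linarith

theorem sq_integral_rpow_mul_le {n R : ℝ} {v : ℝ → ℝ} (hn : 0 < n) (hR : 0 ≤ R)
    (hv : ContinuousOn v (Icc 0 R)) :
    (∫ r in 0..R, r ^ n * v r) ^ 2 ≤
      R ^ (n + 2) / (n + 2) * ∫ r in 0..R, r ^ (n - 1) * v r ^ 2 := by
  set f : ℝ → ℝ := fun r => r ^ ((n + 1) / 2)
  set g : ℝ → ℝ := fun r => r ^ ((n - 1) / 2) * v r
  have hsq : ∀ {r : ℝ} (s : ℝ), 0 ≤ r → (r ^ (s / 2)) ^ 2 = r ^ s := fun s hr => by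
    rw [← Real.rpow_mul_natCast hr]; norm_num
  have hf2 : EqOn (fun r => f r ^ 2) (fun r => r ^ (n + 1)) [[0, R]] := fun r hr =>
    hsq _ (uIcc_of_le hR ▸ hr).1
  have hg2 : EqOn (fun r => g r ^ 2) (fun r => r ^ (n - 1) * v r ^ 2) [[0, R]] := fun r hr => by
    simp only [g, mul_pow, hsq _ (uIcc_of_le hR ▸ hr).1]
  have hfg : EqOn (fun r => f r * g r) (fun r => r ^ n * v r) [[0, R]] := fun r hr => by
    simp only [f, g, ← mul_assoc,
      ← Real.rpow_add' (uIcc_of_le hR ▸ hr).1 (by linarith : (n + 1) / 2 + (n - 1) / 2 ≠ 0)]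
    ring_nf
  have hvI : ContinuousOn v [[0, R]] := by rwa [uIcc_of_le hR]
  have hCS := sq_intervalIntegral_mul_le_s3 (f := f) (g := g) hR
    ((intervalIntegral.intervalIntegrable_rpow' (by linarith)).congr
      (hf2.symm.mono uIoc_subset_uIcc))
    ((intervalIntegrable_rpow_mul (by linarith) (hvI.pow 2)).congr
      (hg2.symm.mono uIoc_subset_uIcc))
    (((Real.continuous_rpow_const hn.le).continuousOn.mul hvI).intervalIntegrable.congr
      (hfg.symm.mono uIoc_subset_uIcc))
  rwa [intervalIntegral.integral_congr hf2, intervalIntegral.integral_congr hg2,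
    intervalIntegral.integral_congr hfg, integral_rpow (Or.inl (by linarith)),
    Real.zero_rpow (by linarith), sub_zero, add_assoc, one_add_one_eq_two] at hCS

theorem integral_rpow_mul_eq_of_hasDerivAt {n R : ℝ} {g w : ℝ → ℝ} (hn : 0 < n) (hR : 0 ≤ R)
    (hg : ContinuousOn g (Icc 0 R)) (hgR : g R = 0)
    (hderiv : ∀ r ∈ Ioo 0 R, HasDerivAt g (-w r) r) (hw : ContinuousOn w (Icc 0 R)) :
    ∫ r in 0..R, r ^ n * w r = n * ∫ r in 0..R, r ^ (n - 1) * g r := by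
  have hpow : Continuous fun r : ℝ => r ^ n := Real.continuous_rpow_const hn.le
  have hint_g : IntervalIntegrable (fun r => r ^ (n - 1) * g r) volume 0 R :=
    intervalIntegrable_rpow_mul (by linarith) (by rwa [uIcc_of_le hR])
  have hint_w : IntervalIntegrable (fun r => r ^ n * w r) volume 0 R :=
    (hpow.continuousOn.mul hw).intervalIntegrable_of_Icc hR
  -- `r ^ n * g r` vanishes at both ends: at `0` because `n > 0`, at `R` because `g R = 0`.
  have hFTC := intervalIntegral.integral_eq_sub_of_hasDerivAt_of_le hR
    (hpow.continuousOn.mul hg)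
    (fun r hr => ((Real.hasDerivAt_rpow_const (Or.inl hr.1.ne')).mul (hderiv r hr)).congr_deriv
      (show _ = n * (r ^ (n - 1) * g r) - r ^ n * w r by ring))
    ((hint_g.const_mul n).sub hint_w)
  rw [intervalIntegral.integral_sub (hint_g.const_mul n) hint_w,
    intervalIntegral.integral_const_mul, Pi.mul_apply, Pi.mul_apply, hgR,
    Real.zero_rpow hn.ne'] at hFTC
  linarith

theorem mul_integral_rpow_mul_sq_le_of_momentum {n R c : ℝ} {v q w : ℝ → ℝ} (hn : 0 < n)
    (hR : 0 ≤ R) (hc : 0 ≤ c) (hv : ContinuousOn v (Icc 0 R)) (hq : ContinuousOn q (Icc 0 R))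
    (hw : ContinuousOn w (Icc 0 R)) (hq_nonneg : ∀ r ∈ Icc 0 R, 0 ≤ q r)
    (hvR : v R = 0) (hqR : q R = 0)
    (hv' : ∀ r ∈ Ioo 0 R, DifferentiableAt ℝ v r) (hq' : ∀ r ∈ Ioo 0 R, DifferentiableAt ℝ q r)
    (hmom : ∀ r ∈ Ioo 0 R, w r + v r * deriv v r + c * deriv q r = 0) :
    n / 2 * ∫ r in 0..R, r ^ (n - 1) * v r ^ 2 ≤ ∫ r in 0..R, r ^ n * w r := by
  set g : ℝ → ℝ := fun r => v r ^ 2 / 2 + c * q r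
  have hg : ContinuousOn g (Icc 0 R) := ((hv.pow 2).div_const 2).add (hq.const_smul c)
  have hg' : ∀ r ∈ Ioo 0 R, HasDerivAt g (-w r) r := fun r hr =>
    ((((hv' r hr).hasDerivAt.pow 2).div_const 2).add
      ((hq' r hr).hasDerivAt.const_mul c)).congr_deriv (by linarith [hmom r hr])
  rw [integral_rpow_mul_eq_of_hasDerivAt hn hR hg (by simp [g, hvR, hqR]) hg' hw,
    ← intervalIntegral.integral_const_mul, ← intervalIntegral.integral_const_mul]
  refine intervalIntegral.integral_mono_on hR ?_ ?_ fun r hr => ?_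
  · exact (intervalIntegrable_rpow_mul (by linarith)
      (by rw [uIcc_of_le hR]; exact hv.pow 2)).const_mul _
  · exact (intervalIntegrable_rpow_mul (by linarith) (by rwa [uIcc_of_le hR])).const_mul _
  · have hpress := mul_nonneg (Real.rpow_nonneg hr.1 (n - 1)) (mul_nonneg hc (hq_nonneg r hr))
    simp only [g]
    nlinarith [mul_nonneg hn.le hpress]

theorem mul_sub_lt_inv_of_mul_sq_le_deriv {H H' : ℝ → ℝ} {κ a b : ℝ} (hab : a ≤ b) (hκ : 0 ≤ κ)
    (hH : ContinuousOn H (Icc a b)) (hH' : ∀ t ∈ Ioo a b, HasDerivAt H (H' t) t)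
    (hineq : ∀ t ∈ Ioo a b, κ * H t ^ 2 ≤ H' t) (ha : 0 < H a) :
    κ * (b - a) < (H a)⁻¹ := by
  have hmono : MonotoneOn H (Icc a b) := by
    refine monotoneOn_of_hasDerivWithinAt_nonneg (f' := H') (convex_Icc a b) hH (fun t ht => ?_)
      (fun t ht => ?_) <;> rw [interior_Icc] at ht
    · exact (hH' t ht).hasDerivWithinAt
    · exact (by positivity : 0 ≤ κ * H t ^ 2).trans (hineq t ht)
  have hpos : ∀ t ∈ Icc a b, 0 < H t := fun t ht => ha.trans_le (hmono ⟨le_rfl, hab⟩ ht ht.1)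
  have hanti : AntitoneOn (fun t => (H t)⁻¹ + κ * t) (Icc a b) := by
    refine antitoneOn_of_hasDerivWithinAt_nonpos (f' := fun t => -H' t / H t ^ 2 + κ)
      (convex_Icc a b)
      ((hH.inv₀ fun t ht => (hpos t ht).ne').add (continuousOn_const.mul continuousOn_id))
      (fun t ht => ?_) (fun t ht => ?_) <;> rw [interior_Icc] at ht
    · exact (((hH' t ht).inv (hpos t (Ioo_subset_Icc_self ht)).ne').add
        ((hasDerivAt_id t).const_mul κ)).hasDerivWithinAt.congr_deriv (by simp)
    · have hHt := pow_pos (hpos t (Ioo_subset_Icc_self ht)) 2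
      rw [neg_div, neg_add_nonpos_iff, le_div_iff₀ hHt]
      exact hineq t ht
  have hend := hanti ⟨le_rfl, hab⟩ ⟨hab, le_rfl⟩ hab
  have := inv_pos.2 (hpos b ⟨hab, le_rfl⟩)
  simp only at hend
  linarith

/-- The functional `H(t)` of the blowup argument. -/
noncomputable def weightedMomentum (n R : ℝ) (V : ℝ → ℝ → ℝ) (t : ℝ) : ℝ :=
  ∫ r in 0..R, r ^ n * V t r

theorem continuousOn_weightedMomentum {n R : ℝ} {V : ℝ → ℝ → ℝ} {K : Set ℝ} (hn : 0 ≤ n)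
    (hR : 0 ≤ R) (hK : IsCompact K) (hV : ContinuousOn (uncurry V) (K ×ˢ Ici 0)) :
    ContinuousOn (weightedMomentum n R V) K :=
  continuousOn_intervalIntegral_of_continuousOn_prod hK hR
    ((hV.mono (prod_mono_right Icc_subset_Ici_self)).rpow_snd_mul hn)

theorem exists_hasDerivAt_weightedMomentum_ge {n R K γ T : ℝ} {ρ V : ℝ → ℝ → ℝ}
    (hn : 0 < n) (hR : 0 < R) (hK : 0 < K) (hγ : 1 < γ) (hT : 0 < T)
    (hρC1 : ContDiffOn ℝ 1 (uncurry ρ) (Icc 0 T ×ˢ Ici 0))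
    (hVC1 : ContDiffOn ℝ 1 (uncurry V) (Icc 0 T ×ˢ Ici 0))
    (hρnn : ∀ t r, 0 ≤ ρ t r) (hsupp : ∀ t r, R ≤ r → ρ t r = 0 ∧ V t r = 0)
    (hdiffp : ∀ t ∈ Icc 0 T, ∀ r ∈ Ioo 0 R, DifferentiableAt ℝ (fun s => ρ t s ^ (γ - 1)) r)
    (hmom : ∀ t ∈ Icc 0 T, ∀ r ∈ Ioo 0 R,
      deriv (fun τ => V τ r) t + V t r * deriv (fun s => V t s) r
        + (K * γ / (γ - 1)) * deriv (fun s => ρ t s ^ (γ - 1)) r = 0) :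
    ∃ H' : ℝ → ℝ, ∀ t ∈ Ioo 0 T, HasDerivAt (weightedMomentum n R V) (H' t) t ∧
      n / 2 * ∫ r in 0..R, r ^ (n - 1) * V t r ^ 2 ≤ H' t := by
  have hS : ∀ t ∈ Ioo 0 T, ∀ r ∈ Ioi 0, Icc 0 T ×ˢ Ici (0 : ℝ) ∈ 𝓝 (t, r) := fun t ht r hr =>
    prod_mem_nhds (Icc_mem_nhds ht.1 ht.2) (Ici_mem_nhds hr)
  have hslice : ∀ f : ℝ → ℝ → ℝ, ContinuousOn (uncurry f) (Icc 0 T ×ˢ Ici 0) →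
      ∀ t ∈ Ioo 0 T, ContinuousOn (f t) (Icc 0 R) := fun f hf t ht =>
    (hf.uncurry_left t (Ioo_subset_Icc_self ht)).mono Icc_subset_Ici_self
  obtain ⟨Vt, hVt_cont, hVt⟩ :=
    hVC1.exists_continuousOn_hasDerivAt_fst ((uniqueDiffOn_Icc hT).prod (uniqueDiffOn_Ici 0))
  refine ⟨fun t => ∫ r in 0..R, r ^ n * Vt t r, fun t ht => ⟨?_, ?_⟩⟩
  · have hrect : Icc 0 T ×ˢ Icc 0 R ⊆ Icc 0 T ×ˢ Ici (0 : ℝ) := prod_mono_right Icc_subset_Ici_self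
    exact hasDerivAt_intervalIntegral_of_continuousOn_prod isCompact_Icc (Icc_mem_nhds ht.1 ht.2)
      hR.le ((hVC1.continuousOn.mono hrect).rpow_snd_mul hn.le)
      ((hVt_cont.mono hrect).rpow_snd_mul hn.le) fun s hs r hr =>
        (hVt s r (hS s (by rwa [interior_Icc] at hs) r hr.1)).const_mul _
  · have hγ1 : 0 < γ - 1 := by linarith
    refine mul_integral_rpow_mul_sq_le_of_momentum (c := K * γ / (γ - 1)) hn hR.le (by positivity)
      (hslice V hVC1.continuousOn t ht)
      ((hslice ρ hρC1.continuousOn t ht).rpow_const fun _ _ => Or.inr hγ1.le)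
      (hslice Vt hVt_cont t ht)
      (fun r _ => Real.rpow_nonneg (hρnn t r) _) (hsupp t R le_rfl).2
      (by simp [(hsupp t R le_rfl).1, Real.zero_rpow hγ1.ne'])
      (fun r hr => ((hVC1.differentiableOn one_ne_zero).differentiableAt (hS t ht r hr.1)).comp r
        ((differentiableAt_const t).prodMk differentiableAt_id))
      (hdiffp t (Ioo_subset_Icc_self ht)) fun r hr => ?_
    rw [← (hVt t r (hS t ht r hr.1)).deriv]
    exact hmom t (Ioo_subset_Icc_self ht) r hr

/-- Blowup on or before `T = 2R^{n+2}/(n(n+1)H₀)` for the `C¹` solutions of the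
compressible isentropic Euler equations (`δ = 0`) with pressure (`K > 0`, `γ > 1`),
in radial symmetry, with compact support in `[0,R]` and initial functional
`H₀ = ∫₀^R rⁿ V₀ dr > 0`: no such solution exists on all of `[0,T]`. -/
theorem blowup_euler_with_pressure
    (n R K γ H₀ T : ℝ)
    (hn : 0 < n) (hR : 0 < R) (hK : 0 < K) (hγ : 1 < γ) (hH₀ : 0 < H₀)
    (hT : T = 2 * R ^ (n + 2) / (n * (n + 1) * H₀))
    (ρ V : ℝ → ℝ → ℝ)
    (hρC1 : ContDiffOn ℝ 1 (Function.uncurry ρ) (Set.Icc 0 T ×ˢ Set.Ici 0))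
    (hVC1 : ContDiffOn ℝ 1 (Function.uncurry V) (Set.Icc 0 T ×ˢ Set.Ici 0))
    (hρnn : ∀ t r, 0 ≤ ρ t r)
    (hsupp : ∀ t r, R ≤ r → ρ t r = 0 ∧ V t r = 0)
    (hdiffp : ∀ t ∈ Set.Icc (0:ℝ) T, ∀ r ∈ Set.Ioo (0:ℝ) R,
      DifferentiableAt ℝ (fun s => ρ t s ^ (γ - 1)) r)
    (hmom : ∀ t ∈ Set.Icc (0:ℝ) T, ∀ r ∈ Set.Ioo (0:ℝ) R,
      deriv (fun τ => V τ r) t + V t r * deriv (fun s => V t s) r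
        + (K * γ / (γ - 1)) * deriv (fun s => ρ t s ^ (γ - 1)) r = 0)
    (hH0 : (∫ r in (0:ℝ)..R, r ^ n * V 0 r) = H₀) :
    False := by
  have hT0 : 0 < T := by rw [hT]; positivity
  obtain ⟨H', hH'⟩ := exists_hasDerivAt_weightedMomentum_ge hn hR hK hγ hT0 hρC1 hVC1 hρnn hsupp
    hdiffp hmom
  set κ := n * (n + 2) / (2 * R ^ (n + 2))
  have hineq : ∀ t ∈ Ioo 0 T, κ * weightedMomentum n R V t ^ 2 ≤ H' t := fun t ht => by
    have hV : ContinuousOn (V t) (Icc 0 R) :=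
      (hVC1.continuousOn.uncurry_left t (Ioo_subset_Icc_self ht)).mono Icc_subset_Ici_self
    calc κ * weightedMomentum n R V t ^ 2
        ≤ κ * (R ^ (n + 2) / (n + 2) * ∫ r in 0..R, r ^ (n - 1) * V t r ^ 2) :=
          mul_le_mul_of_nonneg_left (sq_integral_rpow_mul_le hn hR.le hV) (by positivity)
      _ = n / 2 * ∫ r in 0..R, r ^ (n - 1) * V t r ^ 2 := by simp only [κ]; field_simp
      _ ≤ H' t := (hH' t ht).2
  have hH0' : weightedMomentum n R V 0 = H₀ := hH0
  have hriccati := mul_sub_lt_inv_of_mul_sq_le_deriv hT0.le (by positivity)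
    (continuousOn_weightedMomentum hn.le hR.le isCompact_Icc hVC1.continuousOn)
    (fun t ht => (hH' t ht).1) hineq (hH0'.symm ▸ hH₀)
  have hκT : κ * (T - 0) = (n + 2) / (n + 1) * H₀⁻¹ := by
    simp only [κ, hT, sub_zero]; field_simp
  rw [hκT, hH0'] at hriccati
  have : 1 < (n + 2) / (n + 1) := by rw [one_lt_div (by positivity)]; linarith
  nlinarith [inv_pos.2 hH₀]
end
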